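/- arXiv:1008.1987 — 4 statements merged into one kernel-verified Lean document; each statement's English description precedes it below -/
import Mathlib

section
/- For each i with 1 ≤ i ≤ n+1, the element [e_1, ..., ê_i, ..., e_{n+1}] = (-1)^{n+i+1} e_i defines an alternating n-ary multilinear bracket on the (n+1)-dimensional vector space with basis e_1, ..., e_{n+1} that satisfies the generalized Jacobi identity [[x_1,...,x_n], y_2,...,y_n] = Σ_{i=1}^n [x_1,...,[x_i,y_2,...,y_n],...,x_n]; i.e., L_{n+1} is an n-Lie algebra. -/
/-- The bracket of the `(n+1)`-dimensional algebra `L_{n+1}`: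
the multilinear extension of `[e_1, ..., ê_i, ..., e_{n+1}] = (-1)^{n+i+1} e_i`
(written here with `0`-indexed basis vectors, so that the `1`-indexed sign
`(-1)^{n+i+1}` becomes `(-1)^{n+i}` for `i : Fin (n+1)`). -/
noncomputable def simpleBracket (F : Type) [Field F] (n : ℕ)
    (v : Fin n → (Fin (n + 1) → F)) : Fin (n + 1) → F :=
  ∑ i : Fin (n + 1),
    ((-1 : F) ^ (n + (i : ℕ)) *
      Matrix.det (Matrix.of fun k l : Fin n => v k (i.succAbove l))) • (Pi.single i 1 : Fin (n + 1) → F)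

/-!
The bracket is the generalized cross product on `F^(n+1)`:
`[v] ⬝ᵥ u = det (v₁, …, vₙ, u)`. Multilinearity and the alternating property are inherited
from the determinant. For the Jacobi identity, the matrix `A` of `z ↦ [z, w₂, …, wₙ]`
satisfies `z ⬝ᵥ A z = 0`, so it is skew and traceless. The identity
`∑ᵣ det (Y with row r replaced by A Yᵣ) = tr A · det Y`, applied to `Y = (x₁, …, xₙ, u)`,
then says that the derivation terms paired with `u` sum to `-[x] ⬝ᵥ A u = u ⬝ᵥ A [x]`,
the left-hand side paired with `u`.
-/

namespace Matrix

variable {R ι : Type*} [CommRing R] [Fintype ι]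

theorem sum_det_updateRow_mulVec [DecidableEq ι] (Y A : Matrix ι ι R) :
    ∑ i, (Y.updateRow i (A *ᵥ Y i)).det = A.trace * Y.det := by
  -- Cramer's rule identifies each summand with a diagonal entry of `adj Yᵀ * A * Yᵀ`.
  have hdiag : ∀ i, (Y.updateRow i (A *ᵥ Y i)).det = (Yᵀ.adjugate * A * Yᵀ) i i := by
    intro i
    rw [← cramer_transpose_apply, cramer_eq_adjugate_mulVec, mulVec_mulVec]
    simp [mul_apply, mulVec, dotProduct]
  calc ∑ i, (Y.updateRow i (A *ᵥ Y i)).det = (Yᵀ.adjugate * A * Yᵀ).trace :=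
        Finset.sum_congr rfl fun i _ => hdiag i
    _ = A.trace * Y.det := by
      rw [trace_mul_cycle, mul_adjugate, smul_mul, one_mul, trace_smul, det_transpose,
        smul_eq_mul, mul_comm]

variable {A : Matrix ι ι R}

theorem dotProduct_mulVec_antisymm (hA : ∀ z, z ⬝ᵥ A *ᵥ z = 0) (a b : ι → R) :
    a ⬝ᵥ A *ᵥ b = -(b ⬝ᵥ A *ᵥ a) := by
  have h := hA (a + b)
  rw [mulVec_add, add_dotProduct, dotProduct_add, dotProduct_add, hA a, hA b] at h
  linear_combination h

theorem trace_eq_zero_of_dotProduct_mulVec_self [DecidableEq ι]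
    (hA : ∀ z, z ⬝ᵥ A *ᵥ z = 0) : A.trace = 0 :=
  Finset.sum_eq_zero fun i _ => by simpa [mulVec_single] using hA (Pi.single i 1)

end Matrix

open Matrix

variable {F : Type} [Field F] {n : ℕ}

theorem simpleBracket_apply (v : Fin n → Fin (n + 1) → F) (j : Fin (n + 1)) :
    simpleBracket F n v j = (-1) ^ (n + (j : ℕ)) * ((of v).submatrix id j.succAbove).det := by
  simp only [simpleBracket, Finset.sum_apply, Pi.smul_apply, Pi.single_apply, smul_eq_mul,
    mul_ite, mul_one, mul_zero, Finset.sum_ite_eq, Finset.mem_univ, if_true]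
  rfl

theorem simpleBracket_dotProduct (v : Fin n → Fin (n + 1) → F) (u : Fin (n + 1) → F) :
    simpleBracket F n v ⬝ᵥ u = (of (Fin.snoc v u : Fin (n + 1) → Fin (n + 1) → F)).det := by
  rw [det_succ_row _ (Fin.last n)]
  refine Finset.sum_congr rfl fun j _ => ?_
  have hminor : (of (Fin.snoc v u : Fin (n + 1) → Fin (n + 1) → F)).submatrix Fin.castSucc
      j.succAbove = (of v).submatrix id j.succAbove := by
    ext k l
    simp
  rw [simpleBracket_apply, Fin.succAbove_last, hminor]
  simp only [of_apply, Fin.snoc_last, Fin.val_last]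
  ring

theorem simpleBracket_update_dotProduct (v : Fin n → Fin (n + 1) → F) (k : Fin n)
    (z u : Fin (n + 1) → F) :
    simpleBracket F n (Function.update v k z) ⬝ᵥ u =
      ((of (Fin.snoc v u : Fin (n + 1) → Fin (n + 1) → F)).updateRow k.castSucc z).det := by
  rw [simpleBracket_dotProduct, Fin.snoc_update]
  rfl

theorem simpleBracket_update_add (v : Fin n → Fin (n + 1) → F) (k : Fin n)
    (x y : Fin (n + 1) → F) :
    simpleBracket F n (Function.update v k (x + y)) =
      simpleBracket F n (Function.update v k x) + simpleBracket F n (Function.update v k y) :=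
  dotProduct_eq _ _ fun u => by
    rw [add_dotProduct, simpleBracket_update_dotProduct, simpleBracket_update_dotProduct,
      simpleBracket_update_dotProduct, det_updateRow_add]

theorem simpleBracket_update_smul (v : Fin n → Fin (n + 1) → F) (k : Fin n) (c : F)
    (x : Fin (n + 1) → F) :
    simpleBracket F n (Function.update v k (c • x)) =
      c • simpleBracket F n (Function.update v k x) :=
  dotProduct_eq _ _ fun u => by
    rw [smul_dotProduct, simpleBracket_update_dotProduct, simpleBracket_update_dotProduct,
      det_updateRow_smul, smul_eq_mul]

theorem simpleBracket_comp_perm (σ : Equiv.Perm (Fin n)) (v : Fin n → Fin (n + 1) → F) :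
    simpleBracket F n (v ∘ σ) = (Equiv.Perm.sign σ : ℤ) • simpleBracket F n v := by
  funext j
  have hminor : (of (v ∘ σ)).submatrix id j.succAbove =
      ((of v).submatrix id j.succAbove).submatrix σ id := rfl
  rw [Pi.smul_apply, simpleBracket_apply, simpleBracket_apply, zsmul_eq_mul, hminor, det_permute]
  ring

theorem simpleBracket_single_succAbove (i : Fin (n + 1)) :
    simpleBracket F n (fun k => Pi.single (i.succAbove k) 1) =
      (-1 : F) ^ (n + (i : ℕ)) • Pi.single i 1 := by
  funext j
  rw [simpleBracket_apply]
  rcases eq_or_ne j i with rfl | hji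
  · have hminor : (of fun k => (Pi.single (j.succAbove k) 1 : Fin (n + 1) → F)).submatrix id
        j.succAbove = 1 := by
      ext k l
      simp [Pi.single_apply, one_apply, eq_comm]
    simp [hminor]
  · obtain ⟨k, rfl⟩ := Fin.exists_succAbove_eq hji
    rw [det_eq_zero_of_row_eq_zero k fun l => by simp [Fin.succAbove_ne]]
    simp [hji]

noncomputable def simpleBracketLeft (w : Fin n → Fin (n + 2) → F) :
    (Fin (n + 2) → F) →ₗ[F] Fin (n + 2) → F where
  toFun z := simpleBracket F (n + 1) (Fin.cons z w)
  map_add' x y := by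
    simpa only [Fin.update_cons_zero] using simpleBracket_update_add (Fin.cons 0 w) 0 x y
  map_smul' c x := by
    simpa only [Fin.update_cons_zero, RingHom.id_apply] using
      simpleBracket_update_smul (Fin.cons 0 w) 0 c x

theorem simpleBracket_cons_dotProduct_self (z : Fin (n + 2) → F)
    (w : Fin n → Fin (n + 2) → F) :
    simpleBracket F (n + 1) (Fin.cons z w) ⬝ᵥ z = 0 := by
  rw [simpleBracket_dotProduct, ← Fin.cons_snoc_eq_snoc_cons]
  refine det_zero_of_row_eq (i := 0) (j := Fin.last (n + 1)) Fin.last_pos.ne ?_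
  show (Fin.cons z (Fin.snoc w z) : Fin (n + 2) → Fin (n + 2) → F) 0 =
    (Fin.cons z (Fin.snoc w z) : Fin (n + 2) → Fin (n + 2) → F) (Fin.last n).succ
  rw [Fin.cons_zero, Fin.cons_succ, Fin.snoc_last]

theorem simpleBracket_jacobi (x : Fin (n + 1) → Fin (n + 2) → F)
    (w : Fin n → Fin (n + 2) → F) :
    simpleBracket F (n + 1) (Fin.cons (simpleBracket F (n + 1) x) w) =
      ∑ i, simpleBracket F (n + 1)
        (Function.update x i (simpleBracket F (n + 1) (Fin.cons (x i) w))) := by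
  set A := LinearMap.toMatrix' (simpleBracketLeft w)
  have hA : ∀ z, A *ᵥ z = simpleBracket F (n + 1) (Fin.cons z w) :=
    LinearMap.toMatrix'_mulVec _
  have hAlt : ∀ z, z ⬝ᵥ A *ᵥ z = 0 := fun z => by
    rw [hA, dotProduct_comm, simpleBracket_cons_dotProduct_self]
  refine dotProduct_eq _ _ fun u => ?_
  set Y : Fin (n + 2) → Fin (n + 2) → F := Fin.snoc x u
  have htrace := sum_det_updateRow_mulVec (of Y) A
  rw [trace_eq_zero_of_dotProduct_mulVec_self hAlt, zero_mul, Fin.sum_univ_castSucc] at htrace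
  have hrow : ∀ r, of Y r = Y r := fun _ => rfl
  simp only [hrow, Y, Fin.snoc_castSucc, Fin.snoc_last] at htrace
  calc simpleBracket F (n + 1) (Fin.cons (simpleBracket F (n + 1) x) w) ⬝ᵥ u
      = u ⬝ᵥ A *ᵥ simpleBracket F (n + 1) x := by rw [hA, dotProduct_comm]
    _ = -(simpleBracket F (n + 1) x ⬝ᵥ A *ᵥ u) := dotProduct_mulVec_antisymm hAlt _ _
    _ = -((of Y).updateRow (Fin.last (n + 1)) (A *ᵥ u)).det := by
      rw [simpleBracket_dotProduct, ← Fin.update_snoc_last (x := u)]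
      rfl
    _ = ∑ i : Fin (n + 1), ((of Y).updateRow i.castSucc (A *ᵥ x i)).det :=
      (eq_neg_of_add_eq_zero_left htrace).symm
    _ = _ := by simp only [sum_dotProduct, simpleBracket_update_dotProduct, hA, Y]

theorem simple_nLie_is_nLie_general (F : Type) [Field F] (m : ℕ) :
    -- values on the basis: `[e_1, ..., ê_i, ..., e_{n+1}] = (-1)^{n+i+1} e_i` with `n = m+1`
    (∀ i : Fin (m + 2),
      simpleBracket F (m + 1) (fun k => Pi.single (i.succAbove k) (1 : F)) =
        (-1 : F) ^ (m + 1 + (i : ℕ)) • (Pi.single i 1 : Fin (m + 2) → F)) ∧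
    -- multilinearity in each argument
    (∀ (k : Fin (m + 1)) (v : Fin (m + 1) → (Fin (m + 2) → F)) (c : F)
        (x y : Fin (m + 2) → F),
      simpleBracket F (m + 1) (Function.update v k (c • x + y)) =
        c • simpleBracket F (m + 1) (Function.update v k x) +
          simpleBracket F (m + 1) (Function.update v k y)) ∧
    -- the alternating identity
    (∀ (σ : Equiv.Perm (Fin (m + 1))) (v : Fin (m + 1) → (Fin (m + 2) → F)),
      simpleBracket F (m + 1) (fun k => v (σ k)) =
        (Equiv.Perm.sign σ : ℤ) • simpleBracket F (m + 1) v) ∧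
    -- the generalized Jacobi (derivation) identity
    (∀ (x : Fin (m + 1) → (Fin (m + 2) → F)) (w : Fin m → (Fin (m + 2) → F)),
      simpleBracket F (m + 1) (Fin.cons (simpleBracket F (m + 1) x) w) =
        ∑ i : Fin (m + 1),
          simpleBracket F (m + 1)
            (Function.update x i (simpleBracket F (m + 1) (Fin.cons (x i) w)))) :=
  ⟨simpleBracket_single_succAbove,
    fun k v c x y => by rw [simpleBracket_update_add, simpleBracket_update_smul],
    simpleBracket_comp_perm,
    simpleBracket_jacobi⟩

/-- `L_{n+1}` is an `n`-Lie algebra: its bracket takes the prescribed values on the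
basis, is multilinear, alternating, and satisfies the generalized Jacobi identity. -/
theorem simple_nLie_is_nLie (F : Type) [Field F] (hF : ringChar F ≠ 2)
    (m : ℕ) (hm : 2 ≤ m) :
    -- values on the basis: `[e_1, ..., ê_i, ..., e_{n+1}] = (-1)^{n+i+1} e_i` with `n = m+1`
    (∀ i : Fin (m + 2),
      simpleBracket F (m + 1) (fun k => Pi.single (i.succAbove k) (1 : F)) =
        (-1 : F) ^ (m + 1 + (i : ℕ)) • (Pi.single i 1 : Fin (m + 2) → F)) ∧
    -- multilinearity in each argument
    (∀ (k : Fin (m + 1)) (v : Fin (m + 1) → (Fin (m + 2) → F)) (c : F)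
        (x y : Fin (m + 2) → F),
      simpleBracket F (m + 1) (Function.update v k (c • x + y)) =
        c • simpleBracket F (m + 1) (Function.update v k x) +
          simpleBracket F (m + 1) (Function.update v k y)) ∧
    -- the alternating identity
    (∀ (σ : Equiv.Perm (Fin (m + 1))) (v : Fin (m + 1) → (Fin (m + 2) → F)),
      simpleBracket F (m + 1) (fun k => v (σ k)) =
        (Equiv.Perm.sign σ : ℤ) • simpleBracket F (m + 1) v) ∧
    -- the generalized Jacobi (derivation) identity
    (∀ (x : Fin (m + 1) → (Fin (m + 2) → F)) (w : Fin m → (Fin (m + 2) → F)),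
      simpleBracket F (m + 1) (Fin.cons (simpleBracket F (m + 1) x) w) =
        ∑ i : Fin (m + 1),
          simpleBracket F (m + 1)
            (Function.update x i (simpleBracket F (m + 1) (Fin.cons (x i) w)))) :=
  simple_nLie_is_nLie_general F m
end

section
/- Let n ≥ 4 be even, F a field of characteristic ≠ 2, and let I be the ideal of F⟨x_1,...,x_{n+1}⟩ generated by G_i = (-1)^{⌊n/2⌋}(alt(x_1,...,x̂_i,...,x_{n+1}) + (-1)^{n+i} x_i) for 1 ≤ i ≤ n+1. Then I ∩ span_F(x_1,...,x_{n+1}, 1) = {0}; in particular, the images of x_1,...,x_{n+1} in the quotient U = F⟨X⟩/I are linearly independent. -/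
/-!
Index the letters by `0, …, n` and order words degree-lexicographically. Up to the sign
`sign(rev) = ±1`, the leading word of `G_i` is the decreasing word `w_i` on the letters `≠ i`.
Two leading words overlap only as `x_n w_n = w_0 x_0`, and this ambiguity resolves because
`∑ᵢ (-1)^i [x_i, G_i] = 0`: for even `n`, both `∑ᵢ (-1)^i x_i alt(x̂_i)` and
`∑ᵢ (-1)^i alt(x̂_i) x_i` are `alt(x_0, …, x_n)`. Hence every `u G_i v` reduces to a
combination of products `u' G_j v'` in which `w_j` is the leftmost leading word inside
`u' w_j v'`, and such products have pairwise distinct leading words. A nonzero element of the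
ideal therefore has a word of length `≥ n` in its support, so it does not lie in
`span(1, x_0, …, x_n)`.
-/

open FreeAlgebra

/-- The `n`-ary alternating sum in an associative algebra. -/
noncomputable def altSum {A : Type} [Ring A] (n : ℕ) (x : Fin n → A) : A :=
  ∑ σ : Equiv.Perm (Fin n), (Equiv.Perm.sign σ : ℤ) • (List.ofFn fun k => x (σ k)).prod

namespace Equiv.Perm

variable {n : ℕ}

def succAboveCons (i : Fin (n + 1)) (σ : Perm (Fin n)) : Perm (Fin (n + 1)) :=
  (finSuccEquiv n).trans ((Equiv.optionCongr σ).trans (finSuccEquiv' i).symm)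

@[simp] lemma succAboveCons_zero (i : Fin (n + 1)) (σ : Perm (Fin n)) :
    succAboveCons i σ 0 = i := by
  simp [succAboveCons]

@[simp] lemma succAboveCons_succ (i : Fin (n + 1)) (σ : Perm (Fin n)) (k : Fin n) :
    succAboveCons i σ k.succ = i.succAbove (σ k) := by
  simp [succAboveCons]

lemma ofFn_succAboveCons {α : Type*} (x : Fin (n + 1) → α) (i : Fin (n + 1))
    (σ : Perm (Fin n)) :
    List.ofFn (fun k => x (succAboveCons i σ k)) =
      x i :: List.ofFn (fun k => x (i.succAbove (σ k))) := by
  simp [List.ofFn_succ]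

lemma ofFn_succAboveCons_mul_finRotate {α : Type*} (x : Fin (n + 1) → α) (i : Fin (n + 1))
    (σ : Perm (Fin n)) :
    List.ofFn (fun k => x ((succAboveCons i σ * finRotate (n + 1)) k)) =
      List.ofFn (fun k => x (i.succAbove (σ k))) ++ [x i] := by
  rw [List.ofFn_succ', List.concat_eq_append]
  simp [Fin.coeSucc_eq_succ]

lemma sign_succAboveCons (i : Fin (n + 1)) (σ : Perm (Fin n)) :
    sign (succAboveCons i σ) = (-1) ^ (i : ℕ) * sign σ := by
  have hsplit : succAboveCons i σ = (Fin.cycleRange i).symm * decomposeFin.symm (0, σ) := by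
    ext x
    induction x using Fin.cases with
    | zero => simp [Fin.cycleRange_symm_zero, decomposeFin_symm_apply_zero]
    | succ k => simp [Fin.cycleRange_symm_succ, decomposeFin_symm_apply_succ]
  rw [hsplit, map_mul, sign_symm, Fin.sign_cycleRange, decomposeFin.symm_sign, if_pos rfl,
    one_mul]

lemma succAboveCons_bijective :
    Function.Bijective (fun p : Fin (n + 1) × Perm (Fin n) => succAboveCons p.1 p.2) := by
  rw [Fintype.bijective_iff_injective_and_card]
  refine ⟨fun p q h => ?_, by simp [Fintype.card_perm, Nat.factorial_succ]⟩
  have h0 : p.1 = q.1 := by simpa using congrArg (· 0) h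
  refine Prod.ext h0 (Equiv.ext fun k => Fin.succAbove_right_injective (p := p.1) ?_)
  simpa [h0] using congrArg (· k.succ) h

end Equiv.Perm

section AltSum

open Equiv.Perm

variable {A : Type} [Ring A] {n : ℕ}

theorem altSum_succ_left (x : Fin (n + 1) → A) :
    altSum (n + 1) x =
      ∑ i : Fin (n + 1),
        (-1 : ℤ) ^ (i : ℕ) • (x i * altSum n (fun k => x (i.succAbove k))) := by
  rw [altSum, ← Fintype.sum_bijective _ succAboveCons_bijective _ _ (fun p => rfl),
    Fintype.sum_prod_type]
  refine Finset.sum_congr rfl fun i _ => ?_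
  rw [altSum, Finset.mul_sum, Finset.smul_sum]
  refine Finset.sum_congr rfl fun σ _ => ?_
  rw [ofFn_succAboveCons, List.prod_cons, sign_succAboveCons, mul_smul_comm, ← mul_smul]
  push_cast
  rfl

theorem altSum_succ_right (x : Fin (n + 1) → A) :
    altSum (n + 1) x =
      ∑ i : Fin (n + 1),
        (-1 : ℤ) ^ (n + i) • (altSum n (fun k => x (i.succAbove k)) * x i) := by
  rw [altSum, ← Equiv.sum_comp (Equiv.mulRight (finRotate (n + 1))),
    ← Fintype.sum_bijective _ succAboveCons_bijective _ _ (fun p => rfl), Fintype.sum_prod_type]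
  refine Finset.sum_congr rfl fun i _ => ?_
  rw [altSum, Finset.sum_mul, Finset.smul_sum]
  refine Finset.sum_congr rfl fun σ _ => ?_
  rw [Equiv.coe_mulRight, ofFn_succAboveCons_mul_finRotate, List.prod_append,
    List.prod_singleton, map_mul, sign_succAboveCons, sign_finRotate, Nat.add_sub_cancel,
    smul_mul_assoc, ← mul_smul]
  congr 1
  push_cast
  ring

theorem sum_neg_one_pow_smul_commutator_altSum (heven : Even n) (x : Fin (n + 1) → A) :
    ∑ i : Fin (n + 1), (-1 : ℤ) ^ (i : ℕ) • (x i * altSum n (fun k => x (i.succAbove k)) -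
      altSum n (fun k => x (i.succAbove k)) * x i) = 0 := by
  simp only [smul_sub, Finset.sum_sub_distrib, ← altSum_succ_left]
  rw [altSum_succ_right, sub_eq_zero]
  simp [pow_add, heven.neg_one_pow]

end AltSum

theorem RingQuot.sub_mem_of_mkRingHom_eq {A : Type*} [Ring A] {r : A → A → Prop}
    (I : TwoSidedIdeal A) (hI : ∀ ⦃x y⦄, r x y → x - y ∈ I) {x y : A}
    (h : RingQuot.mkRingHom r x = RingQuot.mkRingHom r y) : x - y ∈ I := by
  have hr : ∀ ⦃a b⦄, r a b → I.ringCon.mk' a = I.ringCon.mk' b := fun a b hab =>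
    (RingCon.eq _).mpr ((I.rel_iff a b).mpr (hI hab))
  have hx := RingQuot.lift_mkRingHom_apply _ hr x
  rw [h, RingQuot.lift_mkRingHom_apply] at hx
  exact (I.rel_iff x y).mp ((RingCon.eq _).mp hx.symm)

theorem List.exists_eq_append_of_append_eq_append {α : Type*} {a b c d : List α}
    (h : a ++ b = c ++ d) (hl : a.length ≤ c.length) : ∃ e, c = a ++ e ∧ b = e ++ d := by
  obtain ⟨e, rfl⟩ :=
    List.prefix_of_prefix_length_le (List.prefix_append a b) (h ▸ List.prefix_append c d) hl
  exact ⟨e, rfl, List.append_cancel_left (h.trans (List.append_assoc _ _ _))⟩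

namespace FreeAlgebra

section CommSemiring

variable (R : Type*) [CommSemiring R] {X : Type*}

def word (m : List X) : FreeAlgebra R X := (m.map (ι R)).prod

variable {R}

@[simp] lemma word_nil : word R ([] : List X) = 1 := rfl

lemma word_append (u v : List X) : word R (u ++ v) = word R u * word R v := by
  simp [word]

@[simp] lemma word_cons (x : X) (m : List X) : word R (x :: m) = ι R x * word R m := by
  simp [word]

lemma word_singleton (x : X) : word R [x] = ι R x := by simp [word]

lemma basisFreeMonoid_apply (m : FreeMonoid X) : basisFreeMonoid R X m = word R m.toList := by
  simp [basisFreeMonoid, equivMonoidAlgebraFreeMonoid, FreeMonoid.lift_apply, word]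

variable (R) in
noncomputable def coeff (m : List X) : FreeAlgebra R X →ₗ[R] R :=
  (basisFreeMonoid R X).coord (FreeMonoid.ofList m)

lemma coeff_word (m m' : List X) :
    coeff R m (word R m') = Finsupp.single (FreeMonoid.ofList m') 1 (FreeMonoid.ofList m) := by
  rw [coeff, ← FreeMonoid.toList_ofList m', ← basisFreeMonoid_apply, Module.Basis.coord_apply,
    Module.Basis.repr_self, FreeMonoid.toList_ofList]

@[simp] lemma coeff_word_self (m : List X) : coeff R m (word R m) = 1 := by
  rw [coeff_word, Finsupp.single_eq_same]

lemma coeff_word_of_ne {m m' : List X} (h : m' ≠ m) : coeff R m (word R m') = 0 := by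
  rw [coeff_word, Finsupp.single_eq_of_ne (by simpa using h.symm)]

lemma coeff_eq_zero_of_mem_span_one_ι {x : FreeAlgebra R X}
    (hx : x ∈ Submodule.span R (insert 1 (Set.range (ι R)))) {m : List X} (hm : 2 ≤ m.length) :
    coeff R m x = 0 := by
  refine (Submodule.span_le (p := LinearMap.ker (coeff R m))).mpr ?_ hx
  rintro _ (rfl | ⟨y, rfl⟩)
  · exact coeff_word_of_ne (m' := []) (by rintro rfl; simp at hm)
  · rw [SetLike.mem_coe, LinearMap.mem_ker, ← word_singleton]
    exact coeff_word_of_ne (by rintro rfl; simp at hm)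

lemma linearIndependent_ι : LinearIndependent R (ι R : X → FreeAlgebra R X) := by
  convert (basisFreeMonoid R X).linearIndependent.comp _ FreeMonoid.of_injective
  funext x
  simp [basisFreeMonoid_apply]

lemma apply_mem_of_forall_word {P : Submodule R (FreeAlgebra R X)}
    (f : FreeAlgebra R X →ₗ[R] FreeAlgebra R X) (h : ∀ m, f (word R m) ∈ P)
    (x : FreeAlgebra R X) : f x ∈ P := by
  refine (Submodule.span_le (p := P.comap f)).mpr ?_ ((basisFreeMonoid R X).mem_span x)
  rintro _ ⟨m, rfl⟩
  simpa [basisFreeMonoid_apply] using h m.toList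

lemma mul_mul_mem_of_forall_word {P : Submodule R (FreeAlgebra R X)} {y : FreeAlgebra R X}
    (h : ∀ u v, word R u * y * word R v ∈ P) (a b : FreeAlgebra R X) : a * y * b ∈ P := by
  have hright : ∀ v, a * y * word R v ∈ P := fun v => by
    simpa [mul_assoc] using apply_mem_of_forall_word (LinearMap.mulRight R (y * word R v))
      (fun u => by simpa [mul_assoc] using h u v) a
  simpa [mul_assoc] using apply_mem_of_forall_word (LinearMap.mulLeft R (a * y)) hright b

end CommSemiring

theorem linearIndependent_mkAlgHom_ι {R X κ : Type*} [CommRing R] (G : κ → FreeAlgebra R X)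
    (h : Disjoint (Submodule.span R {z | ∃ a b i, z = a * G i * b})
      (Submodule.span R (Set.range (ι R)))) :
    LinearIndependent R
      (fun x =>
        RingQuot.mkAlgHom R (fun a b : FreeAlgebra R X => ∃ i, a = G i ∧ b = 0) (ι R x)) := by
  set r : FreeAlgebra R X → FreeAlgebra R X → Prop := fun a b => ∃ i, a = G i ∧ b = 0
  refine linearIndependent_ι.map (f := (RingQuot.mkAlgHom R r).toLinearMap)
    (h.symm.mono_right fun z hz => ?_)
  have hz0 : RingQuot.mkRingHom r z = RingQuot.mkRingHom r 0 := by
    rw [← RingQuot.mkAlgHom_coe R, map_zero]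
    exact hz
  have hmem := RingQuot.sub_mem_of_mkRingHom_eq (TwoSidedIdeal.span (Set.range G))
    (by rintro _ _ ⟨i, rfl, rfl⟩; simpa using TwoSidedIdeal.subset_span (Set.mem_range_self i))
    hz0
  rw [sub_zero, TwoSidedIdeal.mem_span_iff_mem_addSubgroup_closure] at hmem
  refine (AddSubgroup.closure_le (K := (Submodule.span R _).toAddSubgroup)).mpr ?_ hmem
  rintro _ ⟨_, ⟨a, -, _, ⟨i, rfl⟩, rfl⟩, b, -, rfl⟩
  exact Submodule.subset_span ⟨a, b, i, rfl⟩

end FreeAlgebra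

namespace NLieEnvelope

section Words

variable {n : ℕ}

-- The base-`(n + 2)` number with digits `letter + 1`; weights compare words
-- degree-lexicographically.
def weight : List (Fin (n + 1)) → ℕ
  | [] => 0
  | a :: u => ((a : ℕ) + 1) * (n + 2) ^ u.length + weight u

lemma weight_cons (a : Fin (n + 1)) (u : List (Fin (n + 1))) :
    weight (a :: u) = ((a : ℕ) + 1) * (n + 2) ^ u.length + weight u := rfl

lemma weight_lt_pow_length (u : List (Fin (n + 1))) : weight u < (n + 2) ^ u.length := by
  induction u with
  | nil => simp [weight]
  | cons a u ih =>
    have : ((a : ℕ) + 1) * (n + 2) ^ u.length ≤ (n + 1) * (n + 2) ^ u.length :=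
      Nat.mul_le_mul_right _ (by omega)
    rw [weight_cons, List.length_cons, pow_succ]
    nlinarith

lemma pow_length_le_weight_cons (a : Fin (n + 1)) (u : List (Fin (n + 1))) :
    (n + 2) ^ u.length ≤ weight (a :: u) := by
  rw [weight_cons]
  exact Nat.le_add_right_of_le (Nat.le_mul_of_pos_left _ (Nat.succ_pos _))

lemma weight_append (u v : List (Fin (n + 1))) :
    weight (u ++ v) = weight u * (n + 2) ^ v.length + weight v := by
  induction u with
  | nil => simp [weight]
  | cons a u ih =>
    simp only [List.cons_append, weight_cons, List.length_append, ih]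
    ring

lemma weight_lt_weight_of_length_lt {u v : List (Fin (n + 1))} (h : u.length < v.length) :
    weight u < weight v := by
  obtain _ | ⟨b, v⟩ := v
  · simp at h
  · calc weight u < (n + 2) ^ u.length := weight_lt_pow_length u
      _ ≤ (n + 2) ^ v.length := Nat.pow_le_pow_right (by omega) (by simpa using h)
      _ ≤ weight (b :: v) := pow_length_le_weight_cons b v

lemma length_le_length_of_weight_lt {u v : List (Fin (n + 1))} (h : weight u < weight v) :
    u.length ≤ v.length := by
  by_contra hlen
  exact (weight_lt_weight_of_length_lt (not_le.mp hlen)).not_gt h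

lemma weight_append_lt_append {m m' : List (Fin (n + 1))} (v : List (Fin (n + 1)))
    (h : weight m < weight m') : weight (m ++ v) < weight (m' ++ v) := by
  rw [weight_append, weight_append]
  nlinarith [weight_lt_pow_length v]

lemma weight_append_append_lt {m m' : List (Fin (n + 1))} (u v : List (Fin (n + 1)))
    (h : weight m < weight m') : weight (u ++ m ++ v) < weight (u ++ m' ++ v) := by
  have hlen : (m ++ v).length ≤ (m' ++ v).length := by
    simpa using length_le_length_of_weight_lt h
  rw [List.append_assoc, List.append_assoc, weight_append, weight_append u (m' ++ v)]
  have := Nat.mul_le_mul_left (weight u) (Nat.pow_le_pow_right (show 0 < n + 2 by omega) hlen)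
  have := weight_append_lt_append v h
  omega

lemma weight_ofFn_lt_ofFn {k : ℕ} (a b : Fin k → Fin (n + 1)) (j : Fin k)
    (heq : ∀ l < j, a l = b l) (hlt : a j < b j) :
    weight (List.ofFn a) < weight (List.ofFn b) := by
  induction k with
  | zero => exact j.elim0
  | succ k ih =>
    simp only [List.ofFn_succ, weight_cons, List.length_ofFn]
    induction j using Fin.cases with
    | zero =>
      have : ((a 0 : ℕ) + 1 + 1) * (n + 2) ^ k ≤ ((b 0 : ℕ) + 1) * (n + 2) ^ k :=
        Nat.mul_le_mul_right _ (by have := Fin.lt_def.mp hlt; omega)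
      have := weight_lt_pow_length (List.ofFn fun l => a l.succ)
      rw [List.length_ofFn] at this
      nlinarith
    | succ j =>
      rw [heq 0 (Fin.succ_pos j)]
      have := ih (fun l => a l.succ) (fun l => b l.succ) j
        (fun l hl => heq l.succ (Fin.succ_lt_succ_iff.mpr hl)) hlt
      omega

lemma weight_ofFn_lt_ofFn_rev {k : ℕ} {f : Fin k → Fin (n + 1)} (hf : StrictMono f)
    {σ : Equiv.Perm (Fin k)} (hσ : σ ≠ Fin.revPerm) :
    weight (List.ofFn fun l => f (σ l)) < weight (List.ofFn fun l => f (Fin.rev l)) := by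
  have hne : ∃ l, σ l ≠ Fin.rev l := by
    by_contra! h
    exact hσ (Equiv.ext h)
  obtain ⟨j, hj, hmin⟩ := wellFounded_lt.has_min _ hne
  have hagree : ∀ l < j, σ l = Fin.rev l := fun l hl => by
    by_contra h
    exact hmin l h hl
  refine weight_ofFn_lt_ofFn _ _ j (fun l hl => by rw [hagree l hl]) (hf ?_)
  -- Before position `j`, `σ` already takes every value larger than `Fin.rev j`.
  refine lt_of_le_of_ne (not_lt.mp fun hgt => ?_) hj
  have hrev : Fin.rev (σ j) < j := by rwa [Fin.rev_lt_iff]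
  have := hagree _ hrev
  rw [Fin.rev_rev] at this
  exact (σ.injective this ▸ hrev).false

def leadingWord (i : Fin (n + 1)) : List (Fin (n + 1)) :=
  List.ofFn fun k => i.succAbove (Fin.rev k)

variable (n) in
def fullWord : List (Fin (n + 1)) := List.ofFn fun k => Fin.rev k

@[simp] lemma length_leadingWord (i : Fin (n + 1)) : (leadingWord i).length = n := by
  simp [leadingWord]

lemma mem_leadingWord_iff {i j : Fin (n + 1)} : j ∈ leadingWord i ↔ j ≠ i := by
  simp only [leadingWord, List.mem_ofFn]
  refine ⟨fun ⟨k, hk⟩ => hk ▸ Fin.succAbove_ne i _, fun h => ?_⟩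
  obtain ⟨k, hk⟩ := Fin.exists_succAbove_eq h
  exact ⟨Fin.rev k, by simpa using hk⟩

lemma leadingWord_injective : Function.Injective (leadingWord : Fin (n + 1) → _) := by
  intro i j h
  by_contra hne
  exact mem_leadingWord_iff.mp (h ▸ mem_leadingWord_iff.mpr hne) rfl

lemma weight_ofFn_succAbove_lt (i : Fin (n + 1)) {σ : Equiv.Perm (Fin n)}
    (hσ : σ ≠ Fin.revPerm) :
    weight (List.ofFn fun k => i.succAbove (σ k)) < weight (leadingWord i) :=
  weight_ofFn_lt_ofFn_rev (Fin.strictMono_succAbove i) hσ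

lemma fullWord_eq_cons : fullWord n = Fin.last n :: leadingWord (Fin.last n) := by
  simp [fullWord, leadingWord, List.ofFn_succ, Fin.rev_succ]

lemma fullWord_eq_append : fullWord n = leadingWord 0 ++ [0] := by
  rw [fullWord, List.ofFn_succ', List.concat_eq_append]
  simp [leadingWord, Fin.rev_castSucc]

lemma weight_cons_leadingWord_lt {i : Fin (n + 1)} (hi : i ≠ Fin.last n) :
    weight (i :: leadingWord i) < weight (fullWord n) := by
  have h := Equiv.Perm.ofFn_succAboveCons id i Fin.revPerm
  simp only [id, Fin.revPerm_apply] at h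
  rw [leadingWord, ← h]
  refine weight_ofFn_lt_ofFn_rev (f := id) strictMono_id fun hrev => hi ?_
  simpa using congrArg (· 0) hrev

lemma weight_leadingWord_append_lt {i : Fin (n + 1)} (hi : i ≠ 0) :
    weight (leadingWord i ++ [i]) < weight (fullWord n) := by
  have h := Equiv.Perm.ofFn_succAboveCons_mul_finRotate id i Fin.revPerm
  simp only [id, Fin.revPerm_apply] at h
  rw [leadingWord, ← h]
  refine weight_ofFn_lt_ofFn_rev (f := id) strictMono_id fun hrev => hi ?_
  simpa [finRotate_last] using congrArg (· (Fin.last n)) hrev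

lemma val_getElem_leadingWord (i : Fin (n + 1)) (k : ℕ) (hk : k < (leadingWord i).length) :
    ((leadingWord i)[k] : ℕ) = if n - 1 - k < i then n - 1 - k else n - k := by
  rw [length_leadingWord] at hk
  simp only [leadingWord, List.getElem_ofFn, Fin.succAbove, Fin.lt_def]
  split_ifs <;> simp_all <;> omega

lemma leadingWord_overlap (hn : 2 ≤ n) {k i : Fin (n + 1)} {e v v' : List (Fin (n + 1))}
    (h : leadingWord k ++ v' = e ++ (leadingWord i ++ v)) (he : 0 < e.length)
    (he' : e.length < n) :
    k = 0 ∧ i = Fin.last n ∧ e = [Fin.last n] := by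
  have agree : ∀ p (hp : p < n), e.length ≤ p →
      ((leadingWord k)[p]'(by simpa) : ℕ) =
        ((leadingWord i)[p - e.length]'(by simp; omega) : ℕ) := by
    intro p hp hep
    have := congrArg (·[p]?) h
    rw [List.getElem?_append_left (by simpa), List.getElem?_append_right hep,
      List.getElem?_append_left (by simp; omega), List.getElem?_eq_getElem (by simpa),
      List.getElem?_eq_getElem (by simp; omega)] at this
    exact congrArg Fin.val (Option.some.inj this)
  -- The letters at positions `e.length` and `n - 1` of `w_k` already pin down `k`, `i` and `e`.
  have h0 := agree e.length (by omega) le_rfl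
  have h1 := agree (n - 1) (by omega) (by omega)
  rw [val_getElem_leadingWord, val_getElem_leadingWord] at h0 h1
  have hi := i.isLt
  have key : (k : ℕ) = 0 ∧ (i : ℕ) = n ∧ e.length = 1 := by
    split_ifs at h0 h1 <;> omega
  obtain ⟨a, rfl⟩ := List.length_eq_one_iff.mp key.2.2
  have hk0 : k = 0 := Fin.ext key.1
  refine ⟨hk0, Fin.ext key.2.1, ?_⟩
  have ha := congrArg (·[0]?) h
  simp only [List.singleton_append, List.getElem?_cons_zero] at ha
  rw [List.getElem?_append_left (by simp; omega), List.getElem?_eq_getElem (by simp; omega)] at ha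
  have hval := val_getElem_leadingWord k 0 (by simp; omega)
  rw [Option.some.inj ha, hk0, if_neg (by simp)] at hval
  rw [show a = Fin.last n from Fin.ext (by simpa using hval)]

lemma exists_eq_or_overlap (hn : 2 ≤ n) {u u' v v' : List (Fin (n + 1))} {i k : Fin (n + 1)}
    (h : u' ++ (leadingWord k ++ v') = u ++ (leadingWord i ++ v)) (hlt : u'.length < u.length) :
    (∃ e, u = u' ++ (leadingWord k ++ e)) ∨
      (k = 0 ∧ i = Fin.last n ∧ u = u' ++ [Fin.last n]) := by
  obtain ⟨e, rfl, he⟩ := List.exists_eq_append_of_append_eq_append h hlt.le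
  have he0 : 0 < e.length := by simpa using hlt
  rcases lt_or_ge e.length n with hshort | hlong
  · obtain ⟨hk, hi, rfl⟩ := leadingWord_overlap hn he he0 hshort
    exact Or.inr ⟨hk, hi, rfl⟩
  · obtain ⟨e', rfl, -⟩ := List.exists_eq_append_of_append_eq_append he (by simpa using hlong)
    exact Or.inl ⟨e', rfl⟩

end Words

section Reduction

variable {F : Type*} [CommRing F] {n : ℕ}

variable (F) in
def lowerSpan (b : ℕ) : Submodule F (FreeAlgebra F (Fin (n + 1))) :=
  Submodule.span F (word F '' {m | weight m < b})

def IsLeftmost (u : List (Fin (n + 1))) (i : Fin (n + 1)) (v : List (Fin (n + 1))) : Prop :=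
  ∀ u' k v', u ++ (leadingWord i ++ v) = u' ++ (leadingWord k ++ v') → u.length ≤ u'.length

def leftmostSpan (g : Fin (n + 1) → FreeAlgebra F (Fin (n + 1))) :
    Submodule F (FreeAlgebra F (Fin (n + 1))) :=
  Submodule.span F
    ((fun t : List (Fin (n + 1)) × Fin (n + 1) × List (Fin (n + 1)) =>
      word F t.1 * g t.2.1 * word F t.2.2) '' {t | IsLeftmost t.1 t.2.1 t.2.2})

-- The induction hypothesis of the reduction, at an occurrence of a leading word at position `p`
-- of the word `m`.
def ContainsBelow (g : Fin (n + 1) → FreeAlgebra F (Fin (n + 1)))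
    (P : Submodule F (FreeAlgebra F (Fin (n + 1)))) (m : List (Fin (n + 1))) (p : ℕ) : Prop :=
  ∀ u i v, weight (u ++ (leadingWord i ++ v)) < weight m ∨
    (u ++ (leadingWord i ++ v) = m ∧ u.length < p) → word F u * g i * word F v ∈ P

lemma mul_mul_mem_of_mem_lowerSpan {P : Submodule F (FreeAlgebra F (Fin (n + 1)))}
    {a c y : FreeAlgebra F (Fin (n + 1))} {b : ℕ} (hy : y ∈ lowerSpan F b)
    (h : ∀ m, weight m < b → a * word F m * c ∈ P) : a * y * c ∈ P := by
  have : lowerSpan F b ≤ P.comap (LinearMap.mulLeft F a ∘ₗ LinearMap.mulRight F c) := by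
    rw [lowerSpan, Submodule.span_le]
    rintro _ ⟨m, hm, rfl⟩
    simpa [mul_assoc] using h m hm
  simpa [mul_assoc] using this hy

lemma word_mul_mul_mem_lowerSpan (u v : List (Fin (n + 1))) {m : List (Fin (n + 1))}
    {y : FreeAlgebra F (Fin (n + 1))} (hy : y ∈ lowerSpan F (weight m)) :
    word F u * y * word F v ∈ lowerSpan F (weight (u ++ m ++ v)) :=
  mul_mul_mem_of_mem_lowerSpan hy fun m' hm' => Submodule.subset_span
    ⟨u ++ m' ++ v, weight_append_append_lt u v hm', by simp [word_append, mul_assoc]⟩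

lemma coeff_eq_zero_of_mem_lowerSpan {b : ℕ} {m : List (Fin (n + 1))}
    {y : FreeAlgebra F (Fin (n + 1))} (hy : y ∈ lowerSpan F b) (hm : b ≤ weight m) :
    coeff F m y = 0 := by
  refine (Submodule.span_le (p := LinearMap.ker (coeff F m))).mpr ?_ hy
  rintro _ ⟨m', hm', rfl⟩
  exact coeff_word_of_ne (by rintro rfl; exact hm'.not_ge hm)

lemma IsLeftmost.eq {u u' v v' : List (Fin (n + 1))} {i i' : Fin (n + 1)}
    (h : IsLeftmost u i v) (h' : IsLeftmost u' i' v')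
    (heq : u ++ (leadingWord i ++ v) = u' ++ (leadingWord i' ++ v')) :
    (u, i, v) = (u', i', v') := by
  obtain ⟨rfl, hrest⟩ := List.append_inj heq (le_antisymm (h _ _ _ heq) (h' _ _ _ heq.symm))
  obtain ⟨hw, rfl⟩ := List.append_inj hrest (by simp)
  rw [leadingWord_injective hw]

variable {g : Fin (n + 1) → FreeAlgebra F (Fin (n + 1))}

lemma ι_last_mul_eq (heven : Even n)
    (hcomm : ∑ i : Fin (n + 1), (-1 : ℤ) ^ (i : ℕ) • (ι F i * g i - g i * ι F i) = 0) :
    ι F (Fin.last n) * g (Fin.last n) =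
      ∑ i : Fin (n + 1), (-1 : ℤ) ^ (i : ℕ) • (g i * ι F i) -
        ∑ j : Fin n, (-1 : ℤ) ^ (j : ℕ) • (ι F j.castSucc * g j.castSucc) := by
  simp only [smul_sub, Finset.sum_sub_distrib, sub_eq_zero] at hcomm
  rw [Fin.sum_univ_castSucc (fun i => (-1 : ℤ) ^ (i : ℕ) • (ι F i * g i)), Fin.val_last,
    heven.neg_one_pow, one_smul] at hcomm
  rw [eq_sub_iff_add_eq', ← hcomm]
  simp

lemma mem_of_containsBelow_of_overlap (heven : Even n)
    (hcomm : ∑ i : Fin (n + 1), (-1 : ℤ) ^ (i : ℕ) • (ι F i * g i - g i * ι F i) = 0)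
    {P : Submodule F (FreeAlgebra F (Fin (n + 1)))} {u' v : List (Fin (n + 1))}
    (hP : ContainsBelow g P ((u' ++ [Fin.last n]) ++ (leadingWord (Fin.last n) ++ v))
      (u' ++ [Fin.last n]).length) :
    word F (u' ++ [Fin.last n]) * g (Fin.last n) * word F v ∈ P := by
  have hfull : (u' ++ [Fin.last n]) ++ (leadingWord (Fin.last n) ++ v) =
      u' ++ fullWord n ++ v := by
    simp [fullWord_eq_cons]
  rw [hfull] at hP
  rw [word_append, word_singleton, mul_assoc (word F u'), ι_last_mul_eq heven hcomm, mul_sub,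
    sub_mul, Finset.mul_sum, Finset.sum_mul, Finset.mul_sum, Finset.sum_mul]
  refine sub_mem (Submodule.sum_mem _ fun i _ => ?_) (Submodule.sum_mem _ fun j _ => ?_)
  · rw [mul_smul_comm, smul_mul_assoc]
    refine Submodule.smul_of_tower_mem _ _ ?_
    convert hP u' i (i :: v) ?_ using 1
    · simp [mul_assoc]
    rcases eq_or_ne i 0 with rfl | hi
    -- The same leading word `u' ++ fullWord n ++ v`, with `w_0` one letter further left.
    · exact Or.inr ⟨by simp [fullWord_eq_append], by simp⟩
    · exact Or.inl (by simpa using weight_append_append_lt u' v (weight_leadingWord_append_lt hi))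
  · rw [mul_smul_comm, smul_mul_assoc]
    refine Submodule.smul_of_tower_mem _ _ ?_
    convert hP (u' ++ [j.castSucc]) j.castSucc v (Or.inl ?_) using 1
    · simp [word_append, mul_assoc]
    · simpa using weight_append_append_lt u' v
        (weight_cons_leadingWord_lt (Fin.castSucc_lt_last j).ne)

variable (hlead : ∀ i, g i - word F (leadingWord i) ∈ lowerSpan F (weight (leadingWord i)))
include hlead

lemma coeff_word_mul_mul {u v m : List (Fin (n + 1))} {i : Fin (n + 1)}
    (hm : weight (u ++ (leadingWord i ++ v)) ≤ weight m) :
    coeff F m (word F u * g i * word F v) = coeff F m (word F (u ++ (leadingWord i ++ v))) := by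
  have hlow := word_mul_mul_mem_lowerSpan u v (hlead i)
  rw [mul_sub, sub_mul, ← word_append, ← word_append, List.append_assoc] at hlow
  rw [← sub_eq_zero, ← map_sub]
  exact coeff_eq_zero_of_mem_lowerSpan hlow hm

theorem eq_zero_of_mem_leftmostSpan {z : FreeAlgebra F (Fin (n + 1))} (hz : z ∈ leftmostSpan g)
    (hlong : ∀ m : List (Fin (n + 1)), n ≤ m.length → coeff F m z = 0) : z = 0 := by
  obtain ⟨l, hl, rfl⟩ := (Finsupp.mem_span_image_iff_linearCombination F).mp hz
  by_contra hne
  have hsupp : l.support.Nonempty :=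
    Finsupp.support_nonempty_iff.mpr (by rintro rfl; simp at hne)
  obtain ⟨t, ht, hmax⟩ := l.support.exists_max_image
    (fun t => weight (t.1 ++ (leadingWord t.2.1 ++ t.2.2))) hsupp
  refine Finsupp.mem_support_iff.mp ht ?_
  rw [← hlong (t.1 ++ (leadingWord t.2.1 ++ t.2.2)) (by simp; omega),
    Finsupp.linearCombination_apply, Finsupp.sum, map_sum, Finset.sum_eq_single t]
  · simp [coeff_word_mul_mul hlead le_rfl]
  · intro t' ht' hne
    rw [map_smul, coeff_word_mul_mul hlead (hmax t' ht'), coeff_word_of_ne, smul_zero]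
    exact fun heq => hne (IsLeftmost.eq ((Finsupp.mem_supported _ _).mp hl ht')
      ((Finsupp.mem_supported _ _).mp hl ht) heq)
  · exact fun h => absurd ht h

lemma mem_of_containsBelow_of_disjoint (hn : 0 < n)
    {P : Submodule F (FreeAlgebra F (Fin (n + 1)))} {u' e v : List (Fin (n + 1))}
    {i k : Fin (n + 1)}
    (hP : ContainsBelow g P ((u' ++ (leadingWord k ++ e)) ++ (leadingWord i ++ v))
      (u' ++ (leadingWord k ++ e)).length) :
    word F (u' ++ (leadingWord k ++ e)) * g i * word F v ∈ P := by
  -- Trade the occurrence of `w_i` for the occurrence of `w_k` further left.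
  have hsplit : word F (u' ++ (leadingWord k ++ e)) * g i * word F v =
      word F u' * g k * word F (e ++ (leadingWord i ++ v)) +
        word F u' * g k * word F e * (g i - word F (leadingWord i)) * word F v -
        word F u' * (g k - word F (leadingWord k)) * (word F e * g i * word F v) := by
    simp only [word_append]
    noncomm_ring
  rw [hsplit]
  refine sub_mem (add_mem ?_ ?_) ?_
  · exact hP _ _ _ (Or.inr ⟨by simp, by simp; omega⟩)
  · refine mul_mul_mem_of_mem_lowerSpan (hlead i) fun m hm => ?_
    convert hP u' k (e ++ m ++ v) (Or.inl ?_) using 1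
    · simp [word_append, mul_assoc]
    · simpa using weight_append_append_lt (u' ++ leadingWord k ++ e) v hm
  · refine mul_mul_mem_of_mem_lowerSpan (hlead k) fun m hm => ?_
    convert hP (u' ++ m ++ e) i v (Or.inl ?_) using 1
    · simp [word_append, mul_assoc]
    · simpa using weight_append_append_lt u' (e ++ (leadingWord i ++ v)) hm

theorem mem_leftmostSpan (hn : 2 ≤ n) (heven : Even n)
    (hcomm : ∑ i : Fin (n + 1), (-1 : ℤ) ^ (i : ℕ) • (ι F i * g i - g i * ι F i) = 0)
    (u : List (Fin (n + 1))) (i : Fin (n + 1)) (v : List (Fin (n + 1))) :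
    word F u * g i * word F v ∈ leftmostSpan g := by
  by_cases hleft : IsLeftmost u i v
  · exact Submodule.subset_span ⟨(u, i, v), hleft, rfl⟩
  have hbelow : ContainsBelow g (leftmostSpan g) (u ++ (leadingWord i ++ v)) u.length :=
    fun u' i' v' hlt => mem_leftmostSpan hn heven hcomm u' i' v'
  obtain ⟨u', k, v', heq, hlt⟩ : ∃ u' k v',
      u ++ (leadingWord i ++ v) = u' ++ (leadingWord k ++ v') ∧ u'.length < u.length := by
    simpa [IsLeftmost] using hleft
  rcases exists_eq_or_overlap hn heq.symm hlt with ⟨e, rfl⟩ | ⟨-, rfl, rfl⟩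
  · exact mem_of_containsBelow_of_disjoint hlead (by omega) hbelow
  · exact mem_of_containsBelow_of_overlap heven hcomm hbelow
termination_by (weight (u ++ (leadingWord i ++ v)), u.length)
decreasing_by
  rcases hlt with hlt | ⟨heq, hlt⟩
  · exact Prod.Lex.left _ _ hlt
  · rw [heq]
    exact Prod.Lex.right _ hlt

end Reduction

section Relators

variable (F : Type) [CommRing F] {n : ℕ}

-- `G_i` without its factor `(-1) ^ (n / 2)`.
noncomputable def relator (i : Fin (n + 1)) : FreeAlgebra F (Fin (n + 1)) :=
  altSum n (fun k => ι F (i.succAbove k)) + (-1 : F) ^ (n + (i : ℕ) + 1) • ι F i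

variable (n) in
def revSign : F := ((Equiv.Perm.sign (Fin.revPerm : Equiv.Perm (Fin n)) : ℤ) : F)

-- `relator F i` has leading word `leadingWord i`, with coefficient `revSign F n`.
noncomputable def monicRelator (i : Fin (n + 1)) : FreeAlgebra F (Fin (n + 1)) :=
  revSign F n • relator F i

variable {F}

lemma revSign_mul_self : revSign F n * revSign F n = 1 := by
  rw [revSign, ← Int.cast_mul, ← Units.val_mul, Int.units_mul_self, Units.val_one, Int.cast_one]

lemma altSum_ι_succAbove (i : Fin (n + 1)) :
    altSum n (fun k => ι F (i.succAbove k)) =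
      ∑ σ : Equiv.Perm (Fin n), (Equiv.Perm.sign σ : ℤ) •
        word F (List.ofFn fun k => i.succAbove (σ k)) := by
  simp [altSum, word, List.map_ofFn, Function.comp_def]

lemma monicRelator_sub_mem (hn : 2 ≤ n) (i : Fin (n + 1)) :
    monicRelator F i - word F (leadingWord i) ∈ lowerSpan F (weight (leadingWord i)) := by
  rw [monicRelator, relator, altSum_ι_succAbove,
    ← Finset.add_sum_erase _ _ (Finset.mem_univ Fin.revPerm)]
  have hlead : revSign F n • ((Equiv.Perm.sign (Fin.revPerm : Equiv.Perm (Fin n)) : ℤ) •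
      word F (List.ofFn fun k => i.succAbove (Fin.revPerm k))) = word F (leadingWord i) := by
    rw [← Int.cast_smul_eq_zsmul F, smul_smul, ← revSign, revSign_mul_self, one_smul]
    rfl
  rw [smul_add, smul_add, hlead, add_assoc, add_sub_cancel_left]
  refine add_mem (Submodule.smul_mem _ _ (Submodule.sum_mem _ fun σ hσ => ?_))
    (Submodule.smul_mem _ _ (Submodule.smul_mem _ _ ?_))
  · rw [← Int.cast_smul_eq_zsmul F]
    exact Submodule.smul_mem _ _ (Submodule.subset_span
      ⟨_, weight_ofFn_succAbove_lt i (Finset.ne_of_mem_erase hσ), rfl⟩)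
  · exact Submodule.subset_span
      ⟨[i], weight_lt_weight_of_length_lt (by simp; omega), word_singleton i⟩

lemma sum_commutator_monicRelator (heven : Even n) :
    ∑ i : Fin (n + 1), (-1 : ℤ) ^ (i : ℕ) •
      (ι F i * monicRelator F i - monicRelator F i * ι F i) = 0 := by
  have hcomm : ∀ i : Fin (n + 1), ι F i * monicRelator F i - monicRelator F i * ι F i =
      revSign F n • (ι F i * altSum n (fun k => ι F (i.succAbove k)) -
        altSum n (fun k => ι F (i.succAbove k)) * ι F i) := by
    intro i
    simp only [monicRelator, relator, mul_smul_comm, smul_mul_assoc, mul_add, add_mul, smul_sub,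
      smul_add]
    abel
  simp only [hcomm, smul_comm ((-1 : ℤ) ^ _) (revSign F n)]
  rw [← Finset.smul_sum, sum_neg_one_pow_smul_commutator_altSum heven, smul_zero]

end Relators

end NLieEnvelope

open NLieEnvelope in
theorem ideal_meets_span_trivially_general (F : Type) [Field F]
    (n : ℕ) (hn : 4 ≤ n) (heven : Even n)
    (G : Fin (n + 1) → FreeAlgebra F (Fin (n + 1)))
    (hG : ∀ i, G i = (-1 : F) ^ (n / 2) •
      (altSum n (fun k => ι F (i.succAbove k)) + (-1 : F) ^ (n + (i : ℕ) + 1) • ι F i)) :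
    (Submodule.span F {z : FreeAlgebra F (Fin (n + 1)) |
        ∃ (a b : FreeAlgebra F (Fin (n + 1))) (i : Fin (n + 1)), z = a * G i * b} ⊓
      Submodule.span F
        (insert 1 (Set.range (ι F : Fin (n + 1) → FreeAlgebra F (Fin (n + 1))))) = ⊥) ∧
    LinearIndependent F
      (fun i : Fin (n + 1) =>
        RingQuot.mkAlgHom F (fun a b : FreeAlgebra F (Fin (n + 1)) => ∃ i, a = G i ∧ b = 0)
          (ι F i)) := by
  have hlead := monicRelator_sub_mem (F := F) (show 2 ≤ n by omega)
  have hG' : ∀ i, G i = ((-1 : F) ^ (n / 2) * revSign F n) • monicRelator F i := fun i => by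
    rw [hG, monicRelator, smul_smul, mul_assoc, revSign_mul_self, mul_one, relator]
  have hJ :
      Submodule.span F {z | ∃ a b i, z = a * G i * b} ≤ leftmostSpan (monicRelator F) := by
    rw [Submodule.span_le]
    rintro _ ⟨a, b, i, rfl⟩
    rw [hG', mul_smul_comm, smul_mul_assoc]
    exact Submodule.smul_mem _ _ (mul_mul_mem_of_forall_word (fun u v =>
      mem_leftmostSpan hlead (by omega) heven (sum_commutator_monicRelator heven) u i v) a b)
  have hmeet : Submodule.span F {z | ∃ a b i, z = a * G i * b} ⊓
      Submodule.span F (insert 1 (Set.range (ι F))) = ⊥ := by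
    rw [eq_bot_iff]
    rintro z ⟨hzJ, hzS⟩
    exact eq_zero_of_mem_leftmostSpan hlead (hJ hzJ) fun m hm =>
      coeff_eq_zero_of_mem_span_one_ι hzS (by omega)
  refine ⟨hmeet, linearIndependent_mkAlgHom_ι G (disjoint_iff.mpr (eq_bot_mono ?_ hmeet))⟩
  exact inf_le_inf_left _ (Submodule.span_mono (Set.subset_insert _ _))

/-- For `n ≥ 4` even, the two-sided ideal `I = ⟨G_1, ..., G_{n+1}⟩` of the relations of
the universal envelope of the simple `n`-Lie algebra `L_{n+1}` meets
`span_F(1, x_1, ..., x_{n+1})` trivially; in particular the images of the `x_i` in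
`U = F⟨X⟩/I` are linearly independent. -/
theorem ideal_meets_span_trivially (F : Type) [Field F] (hF : ringChar F ≠ 2)
    (n : ℕ) (hn : 4 ≤ n) (heven : Even n)
    (G : Fin (n + 1) → FreeAlgebra F (Fin (n + 1)))
    (hG : ∀ i, G i = (-1 : F) ^ (n / 2) •
      (altSum n (fun k => ι F (i.succAbove k)) + (-1 : F) ^ (n + (i : ℕ) + 1) • ι F i)) :
    (Submodule.span F {z : FreeAlgebra F (Fin (n + 1)) |
        ∃ (a b : FreeAlgebra F (Fin (n + 1))) (i : Fin (n + 1)), z = a * G i * b} ⊓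
      Submodule.span F
        (insert 1 (Set.range (ι F : Fin (n + 1) → FreeAlgebra F (Fin (n + 1))))) = ⊥) ∧
    LinearIndependent F
      (fun i : Fin (n + 1) =>
        RingQuot.mkAlgHom F (fun a b : FreeAlgebra F (Fin (n + 1)) => ∃ i, a = G i ∧ b = 0)
          (ι F i)) :=
  ideal_meets_span_trivially_general F n hn heven G hG
end

section
/- In the free associative algebra on a, b, c, d over a field F of characteristic 0, with G_1 = dcb − dbc − cdb + cbd + bdc − bcd − a and G_4 = cba − cab − bca + bac + acb − abc + d, the element G_1·a − d·G_4 is congruent, modulo the two-sided ideal generated by G_1, G_2, G_3, G_4, to N = d² + c² + b² + a², where G_2 = dca − dac − cda + cad + adc − acd + b and G_3 = dba − dab − bda + bad + adb − abd − c. In particular, N lies in the ideal ⟨G_1, G_2, G_3, G_4⟩. -/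
/-!
Summing the anticommutators `G·x + x·G` over the pairs `(G₁, a), (G₂, b), (G₃, c), (G₄, d)`
with the signs `−, +, −, +`, every cubic monomial cancels and the linear terms of the `Gᵢ`
leave exactly `2N`. As `2` is invertible, `N` lies in the ideal, and then so does
`G₁·a − d·G₄ − N`, both of whose first two terms are multiples of relations.
-/

open FreeAlgebra

section IdealSpan

variable (R : Type*) {A : Type*} [CommRing R] [Ring A] [Algebra R A]

def idealSpan (S : Set A) : Submodule R A :=
  Submodule.span R {z : A | ∃ (u v g : A), g ∈ S ∧ z = u * g * v}

variable {R} {S : Set A} {g : A}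

theorem mul_mem_idealSpan (hg : g ∈ S) (u v : A) : u * g * v ∈ idealSpan R S :=
  Submodule.subset_span ⟨u, v, g, hg, rfl⟩

theorem anticommutator_mem_idealSpan (hg : g ∈ S) (x : A) :
    g * x + x * g ∈ idealSpan R S := by
  refine add_mem ?_ ?_
  · simpa using mul_mem_idealSpan (R := R) hg 1 x
  · simpa using mul_mem_idealSpan (R := R) hg x 1

end IdealSpan

theorem L4_sum_sq_add_self {A : Type*} [Ring A] (a b c d G₁ G₂ G₃ G₄ : A)
    (hG₁ : G₁ = d*c*b - d*b*c - c*d*b + c*b*d + b*d*c - b*c*d - a)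
    (hG₂ : G₂ = d*c*a - d*a*c - c*d*a + c*a*d + a*d*c - a*c*d + b)
    (hG₃ : G₃ = d*b*a - d*a*b - b*d*a + b*a*d + a*d*b - a*b*d - c)
    (hG₄ : G₄ = c*b*a - c*a*b - b*c*a + b*a*c + a*c*b - a*b*c + d) :
    (d*d + c*c + b*b + a*a) + (d*d + c*c + b*b + a*a) =
      (G₂ * b + b * G₂) + (G₄ * d + d * G₄) - (G₁ * a + a * G₁) - (G₃ * c + c * G₃) := by
  subst hG₁ hG₂ hG₃ hG₄
  noncomm_ring

theorem L4_composition_normal_form_general (F : Type) [Field F] (hF : ringChar F = 0)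
    (a b c d : FreeAlgebra F (Fin 4))
    (G₁ G₂ G₃ G₄ : FreeAlgebra F (Fin 4))
    (hG₁ : G₁ = d*c*b - d*b*c - c*d*b + c*b*d + b*d*c - b*c*d - a)
    (hG₂ : G₂ = d*c*a - d*a*c - c*d*a + c*a*d + a*d*c - a*c*d + b)
    (hG₃ : G₃ = d*b*a - d*a*b - b*d*a + b*a*d + a*d*b - a*b*d - c)
    (hG₄ : G₄ = c*b*a - c*a*b - b*c*a + b*a*c + a*c*b - a*b*c + d) :
    (G₁ * a - d * G₄) - (d*d + c*c + b*b + a*a) ∈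
      Submodule.span F {z : FreeAlgebra F (Fin 4) |
        ∃ (u v g : FreeAlgebra F (Fin 4)), g ∈ ({G₁, G₂, G₃, G₄} : Set _) ∧ z = u * g * v} ∧
    (d*d + c*c + b*b + a*a) ∈
      Submodule.span F {z : FreeAlgebra F (Fin 4) |
        ∃ (u v g : FreeAlgebra F (Fin 4)), g ∈ ({G₁, G₂, G₃, G₄} : Set _) ∧ z = u * g * v} := by
  have : CharZero F := (CharP.ringChar_zero_iff_CharZero F).mp hF
  set S : Set (FreeAlgebra F (Fin 4)) := {G₁, G₂, G₃, G₄}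
  have hN : d*d + c*c + b*b + a*a ∈ idealSpan F S := by
    rw [← Submodule.smul_mem_iff _ (two_ne_zero : (2 : F) ≠ 0), two_smul,
      L4_sum_sq_add_self a b c d G₁ G₂ G₃ G₄ hG₁ hG₂ hG₃ hG₄]
    refine sub_mem (sub_mem (add_mem ?_ ?_) ?_) ?_ <;>
      exact anticommutator_mem_idealSpan (by simp [S]) _
  have hG₁a : G₁ * a ∈ idealSpan F S := by
    simpa using mul_mem_idealSpan (R := F) (show G₁ ∈ S by simp [S]) 1 a
  have hdG₄ : d * G₄ ∈ idealSpan F S := by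
    simpa using mul_mem_idealSpan (R := F) (show G₄ ∈ S by simp [S]) d 1
  exact ⟨sub_mem (sub_mem hG₁a hdG₄) hN, hN⟩

/-- In `F⟨a,b,c,d⟩` with the relations `G_1, G_2, G_3, G_4` of the universal envelope of
the simple 3-Lie algebra `L_4`, the composition `G_1·a − d·G_4` is congruent modulo the
two-sided ideal `⟨G_1, G_2, G_3, G_4⟩` to `N = d² + c² + b² + a²`; in particular `N` lies
in this ideal. -/
theorem L4_composition_normal_form (F : Type) [Field F] (hF : ringChar F = 0)
    (a b c d : FreeAlgebra F (Fin 4))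
    (ha : a = ι F 0) (hb : b = ι F 1) (hc : c = ι F 2) (hd : d = ι F 3)
    (G₁ G₂ G₃ G₄ : FreeAlgebra F (Fin 4))
    (hG₁ : G₁ = d*c*b - d*b*c - c*d*b + c*b*d + b*d*c - b*c*d - a)
    (hG₂ : G₂ = d*c*a - d*a*c - c*d*a + c*a*d + a*d*c - a*c*d + b)
    (hG₃ : G₃ = d*b*a - d*a*b - b*d*a + b*a*d + a*d*b - a*b*d - c)
    (hG₄ : G₄ = c*b*a - c*a*b - b*c*a + b*a*c + a*c*b - a*b*c + d) :
    (G₁ * a - d * G₄) - (d*d + c*c + b*b + a*a) ∈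
      Submodule.span F {z : FreeAlgebra F (Fin 4) |
        ∃ (u v g : FreeAlgebra F (Fin 4)), g ∈ ({G₁, G₂, G₃, G₄} : Set _) ∧ z = u * g * v} ∧
    (d*d + c*c + b*b + a*a) ∈
      Submodule.span F {z : FreeAlgebra F (Fin 4) |
        ∃ (u v g : FreeAlgebra F (Fin 4)), g ∈ ({G₁, G₂, G₃, G₄} : Set _) ∧ z = u * g * v} :=
  L4_composition_normal_form_general F hF a b c d G₁ G₂ G₃ G₄ hG₁ hG₂ hG₃ hG₄
end

section
/- Let n ≥ 4 be even and F any field, and consider the ideal I of F⟨x_1,...,x_{n+1}⟩ generated by G_i = (-1)^{⌊n/2⌋} alt(x_1,...,x̂_i,...,x_{n+1}) for all 1 ≤ i ≤ n+1 (the case of the Abelian n-Lie algebra). Then the intersection of I with the span of 1, x_1, ..., x_{n+1} is zero; in particular the images of x_1,...,x_{n+1} in F⟨X⟩/I are linearly independent, so the Abelian (n+1)-dimensional n-Lie algebra embeds into an associative algebra via its alternating n-ary sum. -/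
/-!
Send `x_i` to the basis vector `e_i` in the trivial square-zero extension `F ⊕ (X →₀ F)`. This
algebra map kills every product of two generators, hence every alternating sum of `n ≥ 2`
generators and so the whole ideal `I`; on `span(1, x_1, …, x_{n+1})`, however, it is the
injective map `a + ∑ cᵢ xᵢ ↦ (a, c)`. Hence `I` meets that span trivially, and since the map
factors through `F⟨X⟩/I`, the images of the `x_i` stay linearly independent there.
-/

open FreeAlgebra

theorem map_altSum {A B Fₕ : Type} [Ring A] [Ring B] [FunLike Fₕ A B] [RingHomClass Fₕ A B]
    (f : Fₕ) (n : ℕ) (x : Fin n → A) : f (altSum n x) = altSum n (fun k => f (x k)) := by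
  simp only [altSum, map_sum, map_zsmul, map_list_prod, List.map_ofFn]
  rfl

theorem altSum_eq_zero_of_mul_eq_zero {A : Type} [Ring A] {n : ℕ} (hn : 2 ≤ n) (x : Fin n → A)
    (hx : ∀ i j, x i * x j = 0) : altSum n x = 0 := by
  obtain ⟨m, rfl⟩ : ∃ m, n = m + 2 := ⟨n - 2, by omega⟩
  refine Finset.sum_eq_zero fun σ _ => ?_
  rw [List.ofFn_succ, List.ofFn_succ, List.prod_cons, List.prod_cons, ← mul_assoc, hx,
    zero_mul, smul_zero]

theorem AlgHom.span_mul_mul_le_ker {R A B ι : Type*} [CommSemiring R] [Semiring A] [Semiring B]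
    [Algebra R A] [Algebra R B] (f : A →ₐ[R] B) (g : ι → A) (hg : ∀ i, f (g i) = 0) :
    Submodule.span R {z | ∃ (a b : A) (i : ι), z = a * g i * b} ≤
      LinearMap.ker f.toLinearMap := by
  rw [Submodule.span_le]
  rintro z ⟨a, b, i, rfl⟩
  simp [hg]

namespace FreeAlgebra

variable (R X : Type) [CommRing R]

noncomputable def toTrivSqZeroExt : FreeAlgebra R X →ₐ[R] TrivSqZeroExt R (X →₀ R) :=
  lift R fun i => TrivSqZeroExt.inr (Finsupp.single i 1)

variable {R X}

@[simp]
theorem toTrivSqZeroExt_ι (i : X) :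
    toTrivSqZeroExt R X (ι R i) = TrivSqZeroExt.inr (Finsupp.single i 1) :=
  lift_ι_apply _ _

theorem toTrivSqZeroExt_altSum_ι {n : ℕ} (hn : 2 ≤ n) (x : Fin n → X) :
    toTrivSqZeroExt R X (altSum n fun k => ι R (x k)) = 0 := by
  rw [map_altSum]
  exact altSum_eq_zero_of_mul_eq_zero hn _ fun i j => by simp [TrivSqZeroExt.inr_mul_inr]

theorem toTrivSqZeroExt_smul_one_add_sum (a : R) (c : X →₀ R) :
    toTrivSqZeroExt R X (a • 1 + c.sum fun i b => b • ι R i) =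
      TrivSqZeroExt.inl a + TrivSqZeroExt.inr c := by
  rw [map_add, map_smul, map_one, map_finsuppSum, ← TrivSqZeroExt.inl_one,
    ← TrivSqZeroExt.inl_smul, smul_eq_mul, mul_one]
  simp only [map_smul, toTrivSqZeroExt_ι, ← TrivSqZeroExt.inr_smul, Finsupp.smul_single_one]
  rw [Finsupp.sum, ← TrivSqZeroExt.inr_sum]
  exact congrArg (_ + TrivSqZeroExt.inr ·) c.sum_single

theorem disjoint_span_one_ι_ker_toTrivSqZeroExt :
    Disjoint (Submodule.span R (insert 1 (Set.range (ι R : X → FreeAlgebra R X))))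
      (LinearMap.ker (toTrivSqZeroExt R X).toLinearMap) := by
  rw [Submodule.disjoint_def]
  rintro y hy hker
  obtain ⟨a, z, hz, rfl⟩ := Submodule.mem_span_insert.mp hy
  obtain ⟨c, rfl⟩ := Finsupp.mem_span_range_iff_exists_finsupp.mp hz
  rw [LinearMap.mem_ker, AlgHom.toLinearMap_apply, toTrivSqZeroExt_smul_one_add_sum] at hker
  have ha : a = 0 := by simpa using congrArg TrivSqZeroExt.fst hker
  have hc : c = 0 := by simpa using congrArg TrivSqZeroExt.snd hker
  simp [ha, hc]

theorem linearIndependent_toTrivSqZeroExt_ι :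
    LinearIndependent R fun i => toTrivSqZeroExt R X (ι R i) := by
  simp only [toTrivSqZeroExt_ι]
  exact (Finsupp.linearIndependent_single_one R X).map' (TrivSqZeroExt.inrHom R _)
    (LinearMap.ker_eq_bot.mpr TrivSqZeroExt.inr_injective)

end FreeAlgebra

theorem abelian_embeds_general (F : Type) [Field F]
    (n : ℕ) (hn : 4 ≤ n)
    (G : Fin (n + 1) → FreeAlgebra F (Fin (n + 1)))
    (hG : ∀ i, G i = (-1 : F) ^ (n / 2) • altSum n (fun k => ι F (i.succAbove k))) :
    (Submodule.span F {z : FreeAlgebra F (Fin (n + 1)) |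
        ∃ (a b : FreeAlgebra F (Fin (n + 1))) (i : Fin (n + 1)), z = a * G i * b} ⊓
      Submodule.span F
        (insert 1 (Set.range (ι F : Fin (n + 1) → FreeAlgebra F (Fin (n + 1))))) = ⊥) ∧
    LinearIndependent F
      (fun i : Fin (n + 1) =>
        RingQuot.mkAlgHom F (fun a b : FreeAlgebra F (Fin (n + 1)) => ∃ i, a = G i ∧ b = 0)
          (ι F i)) ∧
    (∀ i : Fin (n + 1),
      altSum n (fun k =>
        RingQuot.mkAlgHom F (fun a b : FreeAlgebra F (Fin (n + 1)) => ∃ i, a = G i ∧ b = 0)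
          (ι F (i.succAbove k))) = 0) := by
  have hG_ker : ∀ i, toTrivSqZeroExt F _ (G i) = 0 := fun i => by
    rw [hG, map_smul, toTrivSqZeroExt_altSum_ι (by omega), smul_zero]
  have hrel : ∀ ⦃a b : FreeAlgebra F (Fin (n + 1))⦄, (∃ i, a = G i ∧ b = 0) →
      toTrivSqZeroExt F _ a = toTrivSqZeroExt F _ b := by
    rintro _ _ ⟨i, rfl, rfl⟩
    rw [hG_ker, map_zero]
  refine ⟨?_, ?_, fun i => ?_⟩
  · exact (disjoint_span_one_ι_ker_toTrivSqZeroExt.mono_right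
      (AlgHom.span_mul_mul_le_ker _ G hG_ker)).symm.eq_bot
  · refine LinearIndependent.of_comp (RingQuot.liftAlgHom F ⟨_, hrel⟩).toLinearMap ?_
    simpa only [Function.comp_def, AlgHom.toLinearMap_apply,
      RingQuot.liftAlgHom_mkAlgHom_apply] using linearIndependent_toTrivSqZeroExt_ι
  · have hunit : (-1 : F) ^ (n / 2) ≠ 0 := pow_ne_zero _ (neg_ne_zero.mpr one_ne_zero)
    rw [← map_altSum (RingQuot.mkAlgHom F _)]
    refine (smul_eq_zero.mp ?_).resolve_left hunit
    rw [← map_smul, ← hG, RingQuot.mkAlgHom_rel F ⟨i, rfl, rfl⟩, map_zero]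

/-- For the Abelian `(n+1)`-dimensional `n`-Lie algebra (`n ≥ 4` even), with
`G_i = (-1)^{⌊n/2⌋} alt(x_1, ..., x̂_i, ..., x_{n+1})`, the two-sided ideal
`I = ⟨G_1, ..., G_{n+1}⟩` meets `span_F(1, x_1, ..., x_{n+1})` trivially; in particular
the images of the `x_i` in `F⟨X⟩/I` are linearly independent, so the Abelian `n`-Lie
algebra embeds into an associative algebra via its alternating `n`-ary sum (the
alternating sum of the images of the basis vectors vanishes, matching the zero
bracket). -/
theorem abelian_embeds (F : Type) [Field F]
    (n : ℕ) (hn : 4 ≤ n) (heven : Even n)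
    (G : Fin (n + 1) → FreeAlgebra F (Fin (n + 1)))
    (hG : ∀ i, G i = (-1 : F) ^ (n / 2) • altSum n (fun k => ι F (i.succAbove k))) :
    (Submodule.span F {z : FreeAlgebra F (Fin (n + 1)) |
        ∃ (a b : FreeAlgebra F (Fin (n + 1))) (i : Fin (n + 1)), z = a * G i * b} ⊓
      Submodule.span F
        (insert 1 (Set.range (ι F : Fin (n + 1) → FreeAlgebra F (Fin (n + 1))))) = ⊥) ∧
    LinearIndependent F
      (fun i : Fin (n + 1) =>
        RingQuot.mkAlgHom F (fun a b : FreeAlgebra F (Fin (n + 1)) => ∃ i, a = G i ∧ b = 0)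
          (ι F i)) ∧
    (∀ i : Fin (n + 1),
      altSum n (fun k =>
        RingQuot.mkAlgHom F (fun a b : FreeAlgebra F (Fin (n + 1)) => ∃ i, a = G i ∧ b = 0)
          (ι F (i.succAbove k))) = 0) :=
  abelian_embeds_general F n hn G hG
end
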